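/- Let α be Hölder continuous on [0,1] and Γ continuous positive. Define, for 0 ≤ s < t ≤ 1, V^α_{s,t} = ∫_s^t Γ(u) e^{2∫_u^t α(v)dv} du, and for each N the product J_N = Π_{k=0}^{2^N−1} √(V^α_{k2^{−N},(k+1)2^{−N}} / V^0_{k2^{−N},(k+1)2^{−N}}). Then lim_{N→∞} J_N = exp(½ ∫₀¹ α(t) dt). -/

import Mathlib

/-!
Write `g(u) = ∫_u^t α - ∫_s^u α`. Since `2∫_u^t α = ∫_s^t α + g(u)`, one has
`V^α_{s,t} = e^{∫_s^t α} ∫_s^t Γ e^g`, so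
`log (V^α_{s,t} / V^0_{s,t}) = ∫_s^t α + log (∫_s^t Γ e^g / ∫_s^t Γ)`.
On an interval of length `h` we have `g = O(h)`, and `g(u)` differs by `o(h)` from
`α(s)((t - u) - (u - s))`, whose integral against the constant `Γ(s)` vanishes. By uniform
continuity of `α` and `Γ` this gives `∫ Γ (e^g - 1) = o(h²)` while `∫ Γ ≥ (inf Γ) h`, so the
correction is `o(h)` uniformly in the position of the interval and the `2^N` corrections of
the dyadic partition sum to `o(1)`. Both `V`'s only see `α` and `Γ` on `[0,1]`, so they may be
replaced by continuous extensions to `ℝ`.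
-/

open MeasureTheory Filter

noncomputable section

/-- `V^a_{s,t} = ∫_s^t Γ(u) e^{2∫_u^t a(v)dv} du`. -/
def Vquad (a Γ : ℝ → ℝ) (s t : ℝ) : ℝ :=
  ∫ u in s..t, Γ u * Real.exp (2 * ∫ v in u..t, a v)

open Set Finset Real intervalIntegral Topology Interval

theorem continuousOn_of_dist_le_mul_rpow {X Y : Type*} [PseudoMetricSpace X] [PseudoMetricSpace Y]
    {f : X → Y} {s : Set X} {C δ : ℝ} (hδ : 0 < δ)
    (hf : ∀ x ∈ s, ∀ y ∈ s, dist (f y) (f x) ≤ C * dist y x ^ δ) : ContinuousOn f s := by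
  intro x hx
  rw [ContinuousWithinAt, tendsto_iff_dist_tendsto_zero]
  have hbound : Tendsto (fun y => C * dist y x ^ δ) (𝓝[s] x) (𝓝 0) := by
    have : Continuous fun y => C * dist y x ^ δ :=
      continuous_const.mul ((continuous_id.dist continuous_const).rpow_const fun _ => Or.inr hδ.le)
    simpa [Real.zero_rpow hδ.ne'] using (this.tendsto x).mono_left nhdsWithin_le_nhds
  exact squeeze_zero' (Eventually.of_forall fun _ => dist_nonneg)
    (eventually_nhdsWithin_of_forall fun y hy => hf x hx y hy) hbound

theorem ContinuousOn.exists_continuous_eqOn_Icc {β : Type*} [TopologicalSpace β] {f : ℝ → β}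
    {a b : ℝ} (hab : a ≤ b) (hf : ContinuousOn f (Icc a b)) :
    ∃ g : ℝ → β, Continuous g ∧ EqOn f g (Icc a b) :=
  ⟨IccExtend hab ((Icc a b).domRestrict f),
    continuous_IccExtend_iff.2 (continuousOn_iff_continuous_domRestrict.1 hf),
    fun _ hx => by rw [IccExtend_of_mem hab _ hx]; rfl⟩

theorem abs_log_le_two_mul_abs_sub_one {x : ℝ} (hx : |x - 1| ≤ 1 / 2) :
    |log x| ≤ 2 * |x - 1| := by
  obtain ⟨hx₁, hx₂⟩ := abs_le.1 hx
  have hx₀ : 0 < x := by linarith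
  rw [abs_le]
  constructor
  · have : x⁻¹ ≤ 1 + 2 * |x - 1| := by
      rw [inv_le_iff_one_le_mul₀ hx₀]
      rcases le_total x 1 with h | h
      · rw [abs_of_nonpos (by linarith)]; nlinarith
      · nlinarith [abs_nonneg (x - 1)]
    linarith [one_sub_inv_le_log_of_pos hx₀]
  · linarith [log_le_sub_one_of_pos hx₀, le_abs_self (x - 1), abs_nonneg (x - 1)]

theorem prod_sqrt_eq_exp_half_mul_sum_log {ι : Type*} (s : Finset ι) {f : ι → ℝ}
    (hf : ∀ i ∈ s, 0 < f i) : ∏ i ∈ s, √(f i) = exp (1 / 2 * ∑ i ∈ s, log (f i)) := by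
  rw [mul_sum, exp_sum]
  exact prod_congr rfl fun i hi => by rw [sqrt_eq_rpow, rpow_def_of_pos (hf i hi), mul_comm]

theorem Continuous.exists_pos_abs_sub_le_on_Icc {f : ℝ → ℝ} {a b ω : ℝ} (hf : Continuous f)
    (hω : 0 < ω) :
    ∃ θ > 0, ∀ s t, a ≤ s → s ≤ t → t ≤ b → t - s ≤ θ → ∀ u ∈ Icc s t, |f u - f s| ≤ ω := by
  obtain ⟨θ, hθ, hf⟩ := Metric.uniformContinuousOn_iff_le.1
    ((isCompact_Icc (a := a) (b := b)).uniformContinuousOn_of_continuous hf.continuousOn) ω hω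
  refine ⟨θ, hθ, fun s t has hst htb hts u hu => ?_⟩
  have hu' : u ∈ Icc a b := ⟨has.trans hu.1, hu.2.trans htb⟩
  simpa only [Real.dist_eq] using hf u hu' s ⟨has, hst.trans htb⟩
    (by rw [Real.dist_eq, abs_of_nonneg (by linarith [hu.1])]; linarith [hu.2])

theorem dyadic_bounds {N k : ℕ} (hk : k < 2 ^ N) :
    0 ≤ (k : ℝ) / 2 ^ N ∧ (k : ℝ) / 2 ^ N < ((k : ℝ) + 1) / 2 ^ N ∧ ((k : ℝ) + 1) / 2 ^ N ≤ 1 := by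
  have hk' : (k : ℝ) + 1 ≤ 2 ^ N := by exact_mod_cast hk
  refine ⟨by positivity, by gcongr; exact lt_add_one _, (div_le_one (by positivity)).2 hk'⟩

theorem sum_integral_dyadic {α : ℝ → ℝ} (hα : IntervalIntegrable α volume 0 1) (N : ℕ) :
    ∑ k ∈ range (2 ^ N), ∫ v in ((k : ℝ) / 2 ^ N)..(((k : ℝ) + 1) / 2 ^ N), α v
      = ∫ v in (0 : ℝ)..1, α v := by
  have hmem {k : ℕ} (hk : k ≤ 2 ^ N) : (k : ℝ) / 2 ^ N ∈ uIcc (0 : ℝ) 1 := by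
    rw [Set.uIcc_of_le zero_le_one]
    exact ⟨by positivity, (div_le_one (by positivity)).2 (by exact_mod_cast hk)⟩
  have h := sum_integral_adjacent_intervals (a := fun k : ℕ => (k : ℝ) / 2 ^ N) (n := 2 ^ N)
    fun k hk => hα.mono_set (uIcc_subset_uIcc (hmem hk.le) (hmem hk))
  simp only [Nat.cast_add, Nat.cast_one, Nat.cast_zero, zero_div, Nat.cast_pow, Nat.cast_ofNat] at h
  rwa [div_self (by positivity)] at h

theorem tendsto_sum_dyadic_of_forall_abs_le {G : ℝ → ℝ → ℝ}
    (hG : ∀ ε > 0, ∃ θ > 0, ∀ s t, 0 ≤ s → s < t → t ≤ 1 → t - s < θ → |G s t| ≤ ε * (t - s)) :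
    Tendsto (fun N : ℕ => ∑ k ∈ range (2 ^ N), G ((k : ℝ) / 2 ^ N) (((k : ℝ) + 1) / 2 ^ N))
      atTop (𝓝 0) := by
  rw [Metric.tendsto_atTop]
  intro ε hε
  obtain ⟨θ, hθ, hGθ⟩ := hG (ε / 2) (half_pos hε)
  obtain ⟨N₀, hN₀⟩ := exists_pow_lt_of_lt_one hθ (by norm_num : (2⁻¹ : ℝ) < 1)
  refine ⟨N₀, fun N hN => ?_⟩
  have hmesh : ((2 : ℝ) ^ N)⁻¹ < θ := by
    rw [← inv_pow]
    exact (pow_le_pow_of_le_one (by norm_num) (by norm_num) hN).trans_lt hN₀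
  rw [dist_zero_right, norm_eq_abs]
  calc _ ≤ ∑ k ∈ range (2 ^ N), |G ((k : ℝ) / 2 ^ N) (((k : ℝ) + 1) / 2 ^ N)| :=
        abs_sum_le_sum_abs _ _
    _ ≤ ∑ _k ∈ range (2 ^ N), ε / 2 * ((2 : ℝ) ^ N)⁻¹ := sum_le_sum fun k hk => by
        obtain ⟨h₀, hlt, h₁⟩ := dyadic_bounds (mem_range.1 hk)
        have hlen : ((k : ℝ) + 1) / 2 ^ N - k / 2 ^ N = ((2 : ℝ) ^ N)⁻¹ := by field_simp; ring
        simpa only [hlen] using hGθ _ _ h₀ hlt h₁ (hlen ▸ hmesh)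
    _ = ε / 2 := by rw [sum_const, card_range, nsmul_eq_mul]; push_cast; field_simp
    _ < ε := half_lt_self hε

theorem Vquad_congr {α α' Γ Γ' : ℝ → ℝ} {s t : ℝ} (hα : EqOn α α' (uIcc s t))
    (hΓ : EqOn Γ Γ' (uIcc s t)) : Vquad α Γ s t = Vquad α' Γ' s t := by
  refine integral_congr fun u hu => ?_
  rw [hΓ hu, integral_congr (hα.mono (uIcc_subset_uIcc hu right_mem_uIcc))]

def integralImbalance (α : ℝ → ℝ) (s t u : ℝ) : ℝ :=
  (∫ v in u..t, α v) - ∫ v in s..u, α v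

section IntegralImbalance

variable {α Γ : ℝ → ℝ} {s t u M : ℝ}

theorem continuous_integralImbalance (hα : Continuous α) :
    Continuous (integralImbalance α s t) := by
  have hprim (a : ℝ) := continuous_primitive (fun x y => hα.intervalIntegrable (μ := volume) x y) a
  exact ((hprim t).neg.sub (hprim s)).congr fun u => by
    rw [integralImbalance, integral_symm t u]; rfl

theorem integralImbalance_sub_const (hα : Continuous α) (c : ℝ) :
    integralImbalance (fun v => α v - c) s t u
      = integralImbalance α s t u - c * ((t - u) - (u - s)) := by
  simp only [integralImbalance, integral_sub (hα.intervalIntegrable _ _) intervalIntegrable_const,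
    intervalIntegral.integral_const, smul_eq_mul]
  ring

theorem abs_integralImbalance_le (hu : u ∈ Icc s t) (hM : ∀ v ∈ Icc s t, |α v| ≤ M) :
    |integralImbalance α s t u| ≤ M * (t - s) := by
  have hbound {a b : ℝ} (hab : Icc a b ⊆ Icc s t) (h : a ≤ b) :
      |∫ v in a..b, α v| ≤ M * (b - a) := by
    simpa [abs_of_nonneg (sub_nonneg.2 h)] using norm_integral_le_of_norm_le_const
      fun v hv => (norm_eq_abs _).trans_le (hM v (hab (Ioc_subset_Icc_self (uIoc_of_le h ▸ hv))))
  calc |integralImbalance α s t u| ≤ |∫ v in u..t, α v| + |∫ v in s..u, α v| := abs_sub _ _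
    _ ≤ M * (t - u) + M * (u - s) := add_le_add
        (hbound (Icc_subset_Icc_left hu.1) hu.2) (hbound (Icc_subset_Icc_right hu.2) hu.1)
    _ = M * (t - s) := by ring

theorem integral_sub_sub_sub_eq_zero : ∫ u in s..t, ((t - u) - (u - s)) = 0 := by
  rw [show (fun u : ℝ => (t - u) - (u - s)) = fun u => (t + s) - 2 * u by ext; ring,
    integral_sub intervalIntegrable_const (intervalIntegrable_id.const_mul 2),
    intervalIntegral.integral_const, intervalIntegral.integral_const_mul, integral_id, smul_eq_mul]
  ring

theorem Vquad_eq_exp_mul (hα : Continuous α) :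
    Vquad α Γ s t
      = exp (∫ v in s..t, α v) * ∫ u in s..t, Γ u * exp (integralImbalance α s t u) := by
  rw [Vquad, ← intervalIntegral.integral_const_mul]
  congr 1
  ext u
  rw [integralImbalance, ← integral_add_adjacent_intervals (hα.intervalIntegrable s u)
    (hα.intervalIntegrable u t), mul_left_comm, ← exp_add]
  congr 2
  ring

theorem Vquad_zero_left : Vquad (fun _ => 0) Γ s t = ∫ u in s..t, Γ u := by
  simp [Vquad]

theorem Vquad_pos (hα : Continuous α) (hΓ : Continuous Γ) (hst : s < t)
    (hΓpos : ∀ u ∈ Ioo s t, 0 < Γ u) : 0 < Vquad α Γ s t := by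
  rw [Vquad_eq_exp_mul hα]
  refine mul_pos (exp_pos _) (intervalIntegral_pos_of_pos_on ?_ (fun u hu => ?_) hst)
  · exact (hΓ.mul (continuous_exp.comp (continuous_integralImbalance hα))).intervalIntegrable _ _
  · exact mul_pos (hΓpos u hu) (exp_pos _)

-- The first-order term `Γ s * α s * ((t - u) - (u - s))` left out on the right integrates to
-- zero; the three integrands that remain are `o(t - s)` uniformly.
theorem integral_mul_exp_integralImbalance_sub_integral (hα : Continuous α) (hΓ : Continuous Γ) :
    (∫ u in s..t, Γ u * exp (integralImbalance α s t u)) - ∫ u in s..t, Γ u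
      = ∫ u in s..t, (Γ u * (exp (integralImbalance α s t u) - 1 - integralImbalance α s t u)
          + (Γ u - Γ s) * integralImbalance α s t u
          + Γ s * integralImbalance (fun v => α v - α s) s t u) := by
  set g := integralImbalance α s t
  have hg : Continuous g := continuous_integralImbalance hα
  have hexpand (u : ℝ) : Γ u * (exp (g u) - 1 - g u) + (Γ u - Γ s) * g u
      + Γ s * integralImbalance (fun v => α v - α s) s t u
      = (Γ u * exp (g u) - Γ u) - Γ s * α s * ((t - u) - (u - s)) := by
    rw [integralImbalance_sub_const hα]
    ring
  simp_rw [hexpand]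
  rw [integral_sub
    ((by fun_prop : Continuous fun u => Γ u * exp (g u) - Γ u).intervalIntegrable _ _)
    ((by fun_prop : Continuous fun u => Γ s * α s * ((t - u) - (u - s))).intervalIntegrable _ _),
    intervalIntegral.integral_const_mul, integral_sub_sub_sub_eq_zero,
    integral_sub ((by fun_prop : Continuous fun u => Γ u * exp (g u)).intervalIntegrable _ _)
      (hΓ.intervalIntegrable _ _)]
  ring

theorem abs_integralImbalance_expansion_le {B ω : ℝ} (hu : u ∈ Icc s t)
    (hM : ∀ v ∈ Icc s t, |α v| ≤ M) (hB : ∀ u ∈ Icc s t, |Γ u| ≤ B)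
    (hαω : ∀ v ∈ Icc s t, |α v - α s| ≤ ω) (hΓω : ∀ u ∈ Icc s t, |Γ u - Γ s| ≤ ω)
    (hω : t - s ≤ ω) (hMst : M * (t - s) ≤ 1) :
    |Γ u * (exp (integralImbalance α s t u) - 1 - integralImbalance α s t u)
        + (Γ u - Γ s) * integralImbalance α s t u
        + Γ s * integralImbalance (fun v => α v - α s) s t u|
      ≤ (B * M ^ 2 + M + B) * ω * (t - s) := by
  set g := integralImbalance α s t u
  have hs : s ∈ Icc s t := ⟨le_rfl, hu.1.trans hu.2⟩
  have hts : 0 ≤ t - s := sub_nonneg.2 hs.2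
  have hB0 : 0 ≤ B := (abs_nonneg _).trans (hB s hs)
  have hω0 : 0 ≤ ω := (abs_nonneg _).trans (hαω s hs)
  have hg : |g| ≤ M * (t - s) := abs_integralImbalance_le hu hM
  have h₁ : |Γ u * (exp g - 1 - g)| ≤ B * M ^ 2 * ω * (t - s) := by
    rw [abs_mul]
    calc |Γ u| * |exp g - 1 - g| ≤ B * (M * (t - s)) ^ 2 := by
          gcongr
          · exact hB u hu
          · exact (abs_exp_sub_one_sub_id_le (hg.trans hMst)).trans
              (sq_abs g ▸ pow_le_pow_left₀ (abs_nonneg _) hg 2)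
      _ = B * M ^ 2 * (t - s) * (t - s) := by ring
      _ ≤ B * M ^ 2 * ω * (t - s) := by gcongr
  have h₂ : |(Γ u - Γ s) * g| ≤ M * ω * (t - s) := by
    rw [abs_mul, mul_assoc, mul_left_comm]
    exact mul_le_mul (hΓω u hu) hg (abs_nonneg _) hω0
  have h₃ : |Γ s * integralImbalance (fun v => α v - α s) s t u| ≤ B * ω * (t - s) := by
    rw [abs_mul, mul_assoc]
    exact mul_le_mul (hB s hs) (abs_integralImbalance_le hu hαω) (abs_nonneg _) hB0
  linarith [abs_add_three (Γ u * (exp g - 1 - g)) ((Γ u - Γ s) * g)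
    (Γ s * integralImbalance (fun v => α v - α s) s t u)]

theorem abs_integral_mul_exp_integralImbalance_sub_le {B ω : ℝ}
    (hα : Continuous α) (hΓ : Continuous Γ) (hst : s ≤ t)
    (hM : ∀ v ∈ Icc s t, |α v| ≤ M) (hB : ∀ u ∈ Icc s t, |Γ u| ≤ B)
    (hαω : ∀ v ∈ Icc s t, |α v - α s| ≤ ω) (hΓω : ∀ u ∈ Icc s t, |Γ u - Γ s| ≤ ω)
    (hω : t - s ≤ ω) (hMst : M * (t - s) ≤ 1) :
    |(∫ u in s..t, Γ u * exp (integralImbalance α s t u)) - ∫ u in s..t, Γ u|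
      ≤ (B * M ^ 2 + M + B) * ω * (t - s) ^ 2 := by
  rw [integral_mul_exp_integralImbalance_sub_integral hα hΓ, ← norm_eq_abs]
  calc _ ≤ (B * M ^ 2 + M + B) * ω * (t - s) * |t - s| :=
        norm_integral_le_of_norm_le_const fun u hu => abs_integralImbalance_expansion_le
          (Ioc_subset_Icc_self (uIoc_of_le hst ▸ hu)) hM hB hαω hΓω hω hMst
    _ = _ := by rw [abs_of_nonneg (sub_nonneg.2 hst)]; ring

theorem abs_log_Vquad_div_sub_integral_le {γ K : ℝ}
    (hα : Continuous α) (hΓ : Continuous Γ) (hst : s < t) (hγ : 0 < γ)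
    (hΓγ : ∀ u ∈ Icc s t, γ ≤ Γ u)
    (hW : |(∫ u in s..t, Γ u * exp (integralImbalance α s t u)) - ∫ u in s..t, Γ u|
      ≤ K * (t - s) ^ 2) (hK : K * (t - s) ≤ γ / 2) :
    |log (Vquad α Γ s t / Vquad (fun _ => 0) Γ s t) - ∫ v in s..t, α v| ≤ 2 * K / γ * (t - s) := by
  set W := ∫ u in s..t, Γ u * exp (integralImbalance α s t u)
  set V := ∫ u in s..t, Γ u
  have hh : 0 < t - s := sub_pos.2 hst
  have hV : γ * (t - s) ≤ V := by
    simpa [mul_comm] using integral_mono_on hst.le (intervalIntegrable_const (μ := volume))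
      (hΓ.intervalIntegrable _ _) hΓγ
  have hV0 : 0 < V := (mul_pos hγ hh).trans_le hV
  have hWV : |W / V - 1| ≤ K * (t - s) / γ := by
    rw [div_sub_one hV0.ne', abs_div, abs_of_pos hV0]
    calc |W - V| / V ≤ K * (t - s) ^ 2 / (γ * (t - s)) :=
          div_le_div₀ ((abs_nonneg _).trans hW) hW (mul_pos hγ hh) hV
      _ = K * (t - s) / γ := by field_simp
  have hWV' : |W / V - 1| ≤ 1 / 2 :=
    hWV.trans ((div_le_iff₀ hγ).2 (by linarith))
  have hWV0 : W / V ≠ 0 := by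
    intro h
    rw [h] at hWV'
    norm_num at hWV'
  rw [Vquad_eq_exp_mul hα, Vquad_zero_left, mul_div_assoc, log_mul (exp_ne_zero _) hWV0, log_exp,
    add_sub_cancel_left]
  calc |log (W / V)| ≤ 2 * |W / V - 1| := abs_log_le_two_mul_abs_sub_one hWV'
    _ ≤ 2 * (K * (t - s) / γ) := by gcongr
    _ = 2 * K / γ * (t - s) := by ring

theorem exists_pos_forall_abs_log_Vquad_div_sub_integral_le {a b ε : ℝ}
    (hα : Continuous α) (hΓ : Continuous Γ) (hΓpos : ∀ x ∈ Icc a b, 0 < Γ x) (hε : 0 < ε) :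
    ∃ θ > 0, ∀ s t, a ≤ s → s < t → t ≤ b → t - s < θ →
      |log (Vquad α Γ s t / Vquad (fun _ => 0) Γ s t) - ∫ v in s..t, α v| ≤ ε * (t - s) := by
  have hbound {f : ℝ → ℝ} (hf : Continuous f) : ∃ C ≥ 0, ∀ x ∈ Icc a b, |f x| ≤ C := by
    obtain ⟨C, hC⟩ := isCompact_Icc.exists_bound_of_continuousOn hf.continuousOn
    exact ⟨max C 0, le_max_right _ _, fun x hx => (hC x hx).trans (le_max_left _ _)⟩
  obtain ⟨M, hM0, hM⟩ := hbound hα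
  obtain ⟨B, hB0, hB⟩ := hbound hΓ
  obtain ⟨γ, hγ, hΓγ⟩ := isCompact_Icc.exists_forall_le' hΓ.continuousOn hΓpos
  set L := B * M ^ 2 + M + B
  set c := γ / 2 * min ε 1
  set ω := min (c / (L + 1)) (1 / (M + 1))
  have hL : 0 ≤ L := by positivity
  have hc : 0 < c := by positivity
  have hω : 0 < ω := by positivity
  have hLω : L * ω ≤ c := calc
    L * ω ≤ (L + 1) * (c / (L + 1)) :=
      mul_le_mul (by linarith) (min_le_left _ _) hω.le (by linarith)
    _ = c := by field_simp
  have hMω : M * ω ≤ 1 := calc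
    M * ω ≤ (M + 1) * (1 / (M + 1)) :=
      mul_le_mul (by linarith) (min_le_right _ _) hω.le (by linarith)
    _ = 1 := by field_simp
  have hω1 : ω ≤ 1 := (min_le_right _ _).trans (div_le_one_of_le₀ (by linarith) (by linarith))
  obtain ⟨θα, hθα, hαω⟩ := hα.exists_pos_abs_sub_le_on_Icc hω
  obtain ⟨θΓ, hθΓ, hΓω⟩ := hΓ.exists_pos_abs_sub_le_on_Icc hω
  refine ⟨min ω (min θα θΓ), by positivity, fun s t has hst htb hθ => ?_⟩
  have hsub : Icc s t ⊆ Icc a b := Icc_subset_Icc has htb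
  simp only [lt_min_iff] at hθ
  have hW := abs_integral_mul_exp_integralImbalance_sub_le hα hΓ hst.le
    (fun v hv => hM v (hsub hv)) (fun u hu => hB u (hsub hu))
    (hαω s t has hst.le htb hθ.2.1.le) (hΓω s t has hst.le htb hθ.2.2.le) hθ.1.le
    ((mul_le_mul_of_nonneg_left hθ.1.le hM0).trans hMω)
  have hΓγ' : ∀ u ∈ Icc s t, γ ≤ Γ u := fun u hu => hΓγ u (hsub hu)
  refine (abs_log_Vquad_div_sub_integral_le hα hΓ hst hγ hΓγ' hW ?_).trans ?_
  · calc L * ω * (t - s) ≤ c * 1 := mul_le_mul hLω (hθ.1.le.trans hω1) (by linarith) hc.le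
      _ ≤ γ / 2 := by
        simp only [c, mul_one]
        exact mul_le_of_le_one_right (by positivity) (min_le_right _ _)
  · gcongr
    calc 2 * (L * ω) / γ ≤ 2 * c / γ := by gcongr
      _ = min ε 1 := by simp only [c]; field_simp
      _ ≤ ε := min_le_left _ _

end IntegralImbalance

theorem tendsto_prod_sqrt_Vquad_div {α Γ : ℝ → ℝ} (hα : Continuous α) (hΓ : Continuous Γ)
    (hΓpos : ∀ t ∈ Icc (0 : ℝ) 1, 0 < Γ t) :
    Tendsto (fun N : ℕ => ∏ k ∈ range (2 ^ N),
        √(Vquad α Γ ((k : ℝ) / 2 ^ N) (((k : ℝ) + 1) / 2 ^ N) /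
          Vquad (fun _ => 0) Γ ((k : ℝ) / 2 ^ N) (((k : ℝ) + 1) / 2 ^ N)))
      atTop (𝓝 (exp (1 / 2 * ∫ t in (0 : ℝ)..1, α t))) := by
  set r := fun s t => Vquad α Γ s t / Vquad (fun _ => 0) Γ s t
  have hr {s t : ℝ} (hs : 0 ≤ s) (hst : s < t) (ht : t ≤ 1) : 0 < r s t := by
    have hΓpos' : ∀ u ∈ Ioo s t, 0 < Γ u := fun u hu => hΓpos u ⟨hs.trans hu.1.le, hu.2.le.trans ht⟩
    exact div_pos (Vquad_pos hα hΓ hst hΓpos') (Vquad_pos continuous_const hΓ hst hΓpos')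
  have hS : Tendsto
      (fun N : ℕ => ∑ k ∈ range (2 ^ N), log (r ((k : ℝ) / 2 ^ N) (((k : ℝ) + 1) / 2 ^ N)))
      atTop (𝓝 (∫ t in (0 : ℝ)..1, α t)) := by
    have h := (tendsto_sum_dyadic_of_forall_abs_le (G := fun s t => log (r s t) - ∫ v in s..t, α v)
      fun ε hε => exists_pos_forall_abs_log_Vquad_div_sub_integral_le hα hΓ hΓpos hε).add_const
        (∫ t in (0 : ℝ)..1, α t)
    rw [zero_add] at h
    refine h.congr fun N => ?_
    rw [sum_sub_distrib, sum_integral_dyadic (hα.intervalIntegrable 0 1), sub_add_cancel]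
  refine ((continuous_exp.tendsto _).comp (hS.const_mul (1 / 2))).congr fun N => ?_
  exact (prod_sqrt_eq_exp_half_mul_sum_log _ fun k hk =>
    let ⟨h₀, hlt, h₁⟩ := dyadic_bounds (mem_range.1 hk); hr h₀ hlt h₁).symm

/-- For `α` Hölder continuous and `Γ` continuous positive on `[0,1]`, the products
`J_N = Π_{k<2^N} √(V^α_{k2^{−N},(k+1)2^{−N}} / V^0_{k2^{−N},(k+1)2^{−N}})` converge to
`exp(½∫₀¹ α)`. -/
theorem stmt_18 (α Γ : ℝ → ℝ)
    (hα : ∃ δ > (0:ℝ), ∃ C : ℝ, ∀ s ∈ Set.Icc (0:ℝ) 1, ∀ t ∈ Set.Icc (0:ℝ) 1,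
      |α t - α s| ≤ C * |t - s| ^ δ)
    (hΓ : ContinuousOn Γ (Set.Icc 0 1))
    (hΓpos : ∀ t ∈ Set.Icc (0:ℝ) 1, 0 < Γ t) :
    Tendsto
      (fun N : ℕ => ∏ k ∈ Finset.range (2 ^ N),
        Real.sqrt (Vquad α Γ ((k : ℝ) / 2 ^ N) (((k : ℝ) + 1) / 2 ^ N) /
          Vquad (fun _ => 0) Γ ((k : ℝ) / 2 ^ N) (((k : ℝ) + 1) / 2 ^ N)))
      atTop (nhds (Real.exp ((1 / 2) * ∫ t in (0:ℝ)..1, α t))) := by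
  obtain ⟨δ, hδ, C, hH⟩ := hα
  obtain ⟨α', hα', hαα'⟩ := (continuousOn_of_dist_le_mul_rpow (f := α) hδ
    (by simpa only [Real.dist_eq] using hH)).exists_continuous_eqOn_Icc zero_le_one
  obtain ⟨Γ', hΓ', hΓΓ'⟩ := hΓ.exists_continuous_eqOn_Icc zero_le_one
  have hI {s t : ℝ} (hs : 0 ≤ s) (hst : s ≤ t) (ht : t ≤ 1) : uIcc s t ⊆ Icc 0 1 :=
    uIcc_subset_Icc ⟨hs, hst.trans ht⟩ ⟨hs.trans hst, ht⟩
  rw [integral_congr (hαα'.mono (hI le_rfl zero_le_one le_rfl))]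
  refine (tendsto_prod_sqrt_Vquad_div hα' hΓ' fun t ht => hΓΓ' ht ▸ hΓpos t ht).congr
    fun N => prod_congr rfl fun k hk => ?_
  obtain ⟨h₀, hlt, h₁⟩ := dyadic_bounds (mem_range.1 hk)
  have hIk := hI h₀ hlt.le h₁
  rw [Vquad_congr (hαα'.mono hIk) (hΓΓ'.mono hIk), Vquad_congr (eqOn_refl _ _) (hΓΓ'.mono hIk)]
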